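/- arXiv:1706.08682 — 4 statements merged into one kernel-verified Lean document; each statement's English description precedes it below -/
import Mathlib

section
/- Let 1 ≤ p < q ≤ ∞ with 1/p - 1/q = λ ∈ (0,1), and let (A_k) be a sequence of pairwise disjoint measurable subsets of [0,1] each of positive measure. The operator T defined on L_p[0,1] by Tf = Σ_k (μ(A_k)^{λ-1} ∫_{A_k} f dμ) χ_{A_k} is a bounded linear operator from L_p[0,1] to L_q[0,1] with operator norm equal to 1. -/
open MeasureTheory ENNReal Filter Set

/-- Lebesgue measure on `[0,1]`. -/
noncomputable def μ01 : Measure ℝ := volume.restrict (Set.Icc 0 1)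

instance : Fact (volume (Set.Icc (0:ℝ) 1) < ∞) := ⟨by simp⟩
instance : IsFiniteMeasure μ01 := ⟨by simp [μ01]⟩

/-!
On each block `A k`, Hölder's inequality bounds the coefficient `c k` of `T f` by
`‖c k‖ * μ(A k)^(1/q) ≤ ‖f‖_{L^p(A k)}`: the exponents `λ - 1`, `1 - 1/p` and `1/q` add up to `0`.
As `T f` equals `c k` on `A k` and vanishes off the blocks, `‖T f‖_q` is the `ℓ^q` norm of the
left-hand sides, which is at most the `ℓ^p` norm of the right-hand sides, and by disjointness that
is at most `‖f‖_p`. Conversely `T` sends `μ(A 0)^(-1/p) χ_{A 0}` to `μ(A 0)^(-1/q) χ_{A 0}`, and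
both have norm `1`.
-/

theorem ENNReal.tsum_rpow_le_rpow_tsum {ι : Type*} (a : ι → ℝ≥0∞) {r : ℝ} (hr : 1 ≤ r) :
    ∑' i, a i ^ r ≤ (∑' i, a i) ^ r := by
  set S := ∑' i, a i
  have hr0 : 0 < r := zero_lt_one.trans_le hr
  obtain hS0 | hS0 := eq_or_ne S 0
  · have ha : ∀ i, a i = 0 := fun i => le_antisymm ((ENNReal.le_tsum i).trans hS0.le) zero_le
    simp [ha, hS0, ENNReal.zero_rpow_of_pos hr0]
  obtain hST | hST := eq_or_ne S ∞
  · simp [hST, ENNReal.top_rpow_of_pos hr0]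
  -- each term satisfies `a i ^ r = a i ^ (r - 1) * a i ≤ S ^ (r - 1) * a i`
  have hterm : ∀ i, a i ^ r ≤ S ^ (r - 1) * a i := by
    intro i
    obtain hi | hi := eq_or_ne (a i) 0
    · simp [hi, ENNReal.zero_rpow_of_pos hr0]
    have hiS : a i ≤ S := ENNReal.le_tsum i
    calc a i ^ r = a i ^ (r - 1) * a i ^ (1 : ℝ) := by
          rw [← ENNReal.rpow_add _ _ hi (ne_top_of_le_ne_top hST hiS)]; ring_nf
      _ ≤ S ^ (r - 1) * a i := by
          rw [ENNReal.rpow_one]; gcongr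
  calc ∑' i, a i ^ r ≤ ∑' i, S ^ (r - 1) * a i := ENNReal.tsum_le_tsum hterm
    _ = S ^ (r - 1) * S ^ (1 : ℝ) := by rw [ENNReal.tsum_mul_left, ENNReal.rpow_one]
    _ = S ^ r := by rw [← ENNReal.rpow_add _ _ hS0 hST]; ring_nf

theorem ENNReal.tsum_rpow_le_rpow_tsum_rpow {ι : Type*} (a : ι → ℝ≥0∞) {p q : ℝ}
    (hp : 0 < p) (hpq : p ≤ q) : ∑' i, a i ^ q ≤ (∑' i, a i ^ p) ^ (q / p) := by
  calc ∑' i, a i ^ q = ∑' i, (a i ^ p) ^ (q / p) := by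
        simp_rw [← ENNReal.rpow_mul, mul_div_cancel₀ q hp.ne']
    _ ≤ (∑' i, a i ^ p) ^ (q / p) :=
        ENNReal.tsum_rpow_le_rpow_tsum _ ((one_le_div hp).mpr hpq)

section

variable {α : Type*} [MeasurableSpace α] {μ : Measure α} {lam : ℝ} {A : ℕ → Set α}
  {p q : ℝ≥0∞}

theorem eLpNorm_rpow_toReal_eq_lintegral (hp0 : p ≠ 0) (hpT : p ≠ ∞)
    (f : α → ℝ) (ν : Measure α) :
    eLpNorm f p ν ^ p.toReal = ∫⁻ x, ‖f x‖ₑ ^ p.toReal ∂ν := by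
  rw [eLpNorm_eq_lintegral_rpow_enorm_toReal hp0 hpT, ← ENNReal.rpow_mul, one_div,
    inv_mul_cancel₀ (ENNReal.toReal_ne_zero.mpr ⟨hp0, hpT⟩), ENNReal.rpow_one]

theorem tsum_eLpNorm_restrict_rpow_le (hp0 : p ≠ 0) (hpT : p ≠ ∞)
    (hAm : ∀ k, MeasurableSet (A k)) (hAd : Pairwise fun i j => Disjoint (A i) (A j)) (f : α → ℝ) :
    ∑' k, eLpNorm f p (μ.restrict (A k)) ^ p.toReal ≤ eLpNorm f p μ ^ p.toReal := by
  simp_rw [eLpNorm_rpow_toReal_eq_lintegral hp0 hpT, ← lintegral_iUnion hAm hAd]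
  exact setLIntegral_le_lintegral _ _

variable (μ lam A) in
noncomputable def blockCoeff (f : α → ℝ) (k : ℕ) : ℝ :=
  μ.real (A k) ^ (lam - 1) * ∫ x in A k, f x ∂μ

variable (μ lam A) in
noncomputable def blockAverage (f : α → ℝ) (t : α) : ℝ :=
  ∑' k, blockCoeff μ lam A f k * (A k).indicator (fun _ => (1 : ℝ)) t

theorem blockAverage_apply_of_mem (hAd : Pairwise fun i j => Disjoint (A i) (A j))
    (f : α → ℝ) {t : α} {j : ℕ} (ht : t ∈ A j) :
    blockAverage μ lam A f t = blockCoeff μ lam A f j := by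
  rw [blockAverage, tsum_eq_single j fun k hk => by
    rw [indicator_of_notMem (disjoint_left.mp (hAd hk.symm) ht), mul_zero]]
  simp [ht]

theorem blockAverage_apply_of_forall_notMem (f : α → ℝ) {t : α} (ht : ∀ k, t ∉ A k) :
    blockAverage μ lam A f t = 0 := by
  simp [blockAverage, ht]

theorem enorm_blockAverage_le (hAd : Pairwise fun i j => Disjoint (A i) (A j))
    {f : α → ℝ} {C : ℝ≥0∞} (hC : ∀ k, ‖blockCoeff μ lam A f k‖ₑ ≤ C) (t : α) :
    ‖blockAverage μ lam A f t‖ₑ ≤ C := by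
  by_cases ht : ∃ j, t ∈ A j
  · obtain ⟨j, hj⟩ := ht
    rw [blockAverage_apply_of_mem hAd f hj]
    exact hC j
  · push Not at ht
    simp [blockAverage_apply_of_forall_notMem f ht]

theorem measurable_blockAverage (hAm : ∀ k, MeasurableSet (A k)) (f : α → ℝ) :
    Measurable (blockAverage μ lam A f) :=
  Measurable.tsum fun k => measurable_const.mul (measurable_const.indicator (hAm k))

theorem blockAverage_congr_ae {f g : α → ℝ} (h : f =ᵐ[μ] g) :
    blockAverage μ lam A f = blockAverage μ lam A g := by
  have hint : ∀ k, ∫ x in A k, f x ∂μ = ∫ x in A k, g x ∂μ :=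
    fun k => integral_congr_ae (ae_restrict_of_ae h)
  ext t
  simp only [blockAverage, blockCoeff, hint]

theorem blockAverage_add (hAd : Pairwise fun i j => Disjoint (A i) (A j)) {f g : α → ℝ}
    (hf : ∀ k, IntegrableOn f (A k) μ) (hg : ∀ k, IntegrableOn g (A k) μ) :
    blockAverage μ lam A (f + g) = blockAverage μ lam A f + blockAverage μ lam A g := by
  ext t
  by_cases ht : ∃ j, t ∈ A j
  · obtain ⟨j, hj⟩ := ht
    simp only [Pi.add_apply, blockAverage_apply_of_mem hAd _ hj, blockCoeff,
      integral_add (hf j) (hg j), mul_add]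
  · push Not at ht
    simp [blockAverage_apply_of_forall_notMem _ ht]

theorem blockAverage_smul (hAd : Pairwise fun i j => Disjoint (A i) (A j)) (c : ℝ)
    (f : α → ℝ) : blockAverage μ lam A (c • f) = c • blockAverage μ lam A f := by
  ext t
  by_cases ht : ∃ j, t ∈ A j
  · obtain ⟨j, hj⟩ := ht
    simp only [Pi.smul_apply, blockAverage_apply_of_mem hAd _ hj, blockCoeff,
      smul_eq_mul, integral_const_mul]
    ring
  · push Not at ht
    simp [blockAverage_apply_of_forall_notMem _ ht]

theorem blockAverage_indicator (hAm : ∀ k, MeasurableSet (A k))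
    (hAd : Pairwise fun i j => Disjoint (A i) (A j)) {j : ℕ} (hj : μ.real (A j) ≠ 0) (c : ℝ) :
    blockAverage μ lam A ((A j).indicator fun _ => c) =
      (A j).indicator fun _ => μ.real (A j) ^ lam * c := by
  ext t
  by_cases ht : ∃ k, t ∈ A k
  · obtain ⟨k, hk⟩ := ht
    rw [blockAverage_apply_of_mem hAd _ hk, blockCoeff, setIntegral_indicator (hAm j)]
    obtain rfl | hkj := eq_or_ne k j
    · rw [inter_self, setIntegral_const, smul_eq_mul, indicator_of_mem hk, ← mul_assoc,
        ← Real.rpow_add_one hj]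
      ring_nf
    · simp [disjoint_iff_inter_eq_empty.mp (hAd hkj),
        indicator_of_notMem (disjoint_left.mp (hAd hkj) hk)]
  · push Not at ht
    simp [blockAverage_apply_of_forall_notMem _ ht, ht j]

theorem enorm_blockCoeff_mul_le (hp : 1 ≤ p) (hlam : lam = (1 / p).toReal - (1 / q).toReal)
    {f : α → ℝ} (hf : AEStronglyMeasurable f μ) {k : ℕ} (hA : μ (A k) ≠ ∞) :
    ‖blockCoeff μ lam A f k‖ₑ * μ (A k) ^ (1 / q).toReal ≤ eLpNorm f p (μ.restrict (A k)) := by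
  obtain h0 | h0 := eq_or_ne (μ (A k)) 0
  · simp [blockCoeff, Measure.restrict_eq_zero.mpr h0]
  set m := μ (A k)
  set N := eLpNorm f p (μ.restrict (A k))
  have hHolder : ‖∫ x in A k, f x ∂μ‖ₑ ≤ N * m ^ (1 - 1 / p.toReal) :=
    calc ‖∫ x in A k, f x ∂μ‖ₑ ≤ eLpNorm f 1 (μ.restrict (A k)) := by
          rw [eLpNorm_one_eq_lintegral_enorm]; exact enorm_integral_le_lintegral_enorm _
      _ ≤ N * μ.restrict (A k) univ ^ (1 / (1 : ℝ≥0∞).toReal - 1 / p.toReal) :=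
          eLpNorm_le_eLpNorm_mul_rpow_measure_univ hp hf.restrict
      _ = N * m ^ (1 - 1 / p.toReal) := by simp [m]
  have hweight : ‖μ.real (A k) ^ (lam - 1)‖ₑ = m ^ (lam - 1) := by
    rw [measureReal_def, ENNReal.toReal_rpow, Real.enorm_eq_ofReal ENNReal.toReal_nonneg,
      ENNReal.ofReal_toReal (ENNReal.rpow_ne_top_of_ne_zero h0 hA)]
  have hexp : m ^ (lam - 1) * (m ^ (1 - 1 / p.toReal) * m ^ (1 / q).toReal) = 1 := by
    rw [← ENNReal.rpow_add _ _ h0 hA, ← ENNReal.rpow_add _ _ h0 hA, hlam]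
    simp only [one_div, ENNReal.toReal_inv]
    ring_nf
    exact ENNReal.rpow_zero
  calc ‖blockCoeff μ lam A f k‖ₑ * m ^ (1 / q).toReal
      = m ^ (lam - 1) * ‖∫ x in A k, f x ∂μ‖ₑ * m ^ (1 / q).toReal := by
        rw [blockCoeff, enorm_mul, hweight]
    _ ≤ m ^ (lam - 1) * (N * m ^ (1 - 1 / p.toReal)) * m ^ (1 / q).toReal := by gcongr
    _ = N * (m ^ (lam - 1) * (m ^ (1 - 1 / p.toReal) * m ^ (1 / q).toReal)) := by ring
    _ = N := by rw [hexp, mul_one]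

theorem lintegral_enorm_blockAverage_rpow (hAm : ∀ k, MeasurableSet (A k))
    (hAd : Pairwise fun i j => Disjoint (A i) (A j)) (f : α → ℝ) {r : ℝ} (hr : 0 < r) :
    ∫⁻ t, ‖blockAverage μ lam A f t‖ₑ ^ r ∂μ = ∑' k, ‖blockCoeff μ lam A f k‖ₑ ^ r * μ (A k) := by
  have hU : MeasurableSet (⋃ k, A k) := MeasurableSet.iUnion hAm
  have hcompl : ∫⁻ t in (⋃ k, A k)ᶜ, ‖blockAverage μ lam A f t‖ₑ ^ r ∂μ = 0 := by
    refine (setLIntegral_congr_fun hU.compl fun t ht => ?_).trans lintegral_zero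
    rw [blockAverage_apply_of_forall_notMem f (by simpa using ht), enorm_zero,
      ENNReal.zero_rpow_of_pos hr]
  rw [← lintegral_add_compl _ hU, hcompl, add_zero, lintegral_iUnion hAm hAd]
  refine tsum_congr fun k => ?_
  rw [setLIntegral_congr_fun (hAm k) fun t ht => by rw [blockAverage_apply_of_mem hAd f ht],
    setLIntegral_const]

theorem eLpNorm_blockAverage_le (hp : 1 ≤ p) (hpq : p ≤ q)
    (hlam : lam = (1 / p).toReal - (1 / q).toReal) (hAm : ∀ k, MeasurableSet (A k))
    (hAd : Pairwise fun i j => Disjoint (A i) (A j)) (hA : ∀ k, μ (A k) ≠ ∞) {f : α → ℝ}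
    (hf : AEStronglyMeasurable f μ) :
    eLpNorm (blockAverage μ lam A f) q μ ≤ eLpNorm f p μ := by
  have hcoeff k := enorm_blockCoeff_mul_le hp hlam hf (hA k)
  obtain rfl | hqT := eq_or_ne q ∞
  · have hbound : ∀ k, ‖blockCoeff μ lam A f k‖ₑ ≤ eLpNorm f p μ := fun k => by
      simpa using (hcoeff k).trans (eLpNorm_restrict_le _ _ _ _)
    simpa using eLpNorm_le_of_ae_enorm_bound (p := ∞) (μ := μ)
      (ae_of_all _ (enorm_blockAverage_le hAd hbound))
  have hpT : p ≠ ∞ := ne_top_of_le_ne_top hqT hpq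
  have hp0 : p ≠ 0 := (zero_lt_one.trans_le hp).ne'
  have hq0 : q ≠ 0 := (zero_lt_one.trans_le (hp.trans hpq)).ne'
  have hpr : 0 < p.toReal := ENNReal.toReal_pos hp0 hpT
  have hqr : 0 < q.toReal := ENNReal.toReal_pos hq0 hqT
  have hterm : ∀ k, ‖blockCoeff μ lam A f k‖ₑ ^ q.toReal * μ (A k) ≤
      eLpNorm f p (μ.restrict (A k)) ^ q.toReal := fun k => by
    have h := ENNReal.rpow_le_rpow (hcoeff k) hqr.le
    rwa [ENNReal.mul_rpow_of_nonneg _ _ hqr.le, ← ENNReal.rpow_mul, one_div, ENNReal.toReal_inv,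
      inv_mul_cancel₀ hqr.ne', ENNReal.rpow_one] at h
  rw [← ENNReal.rpow_le_rpow_iff hqr]
  calc eLpNorm (blockAverage μ lam A f) q μ ^ q.toReal
      = ∑' k, ‖blockCoeff μ lam A f k‖ₑ ^ q.toReal * μ (A k) := by
        rw [eLpNorm_rpow_toReal_eq_lintegral hq0 hqT,
          lintegral_enorm_blockAverage_rpow hAm hAd f hqr]
    _ ≤ ∑' k, eLpNorm f p (μ.restrict (A k)) ^ q.toReal := ENNReal.tsum_le_tsum hterm
    _ ≤ (∑' k, eLpNorm f p (μ.restrict (A k)) ^ p.toReal) ^ (q.toReal / p.toReal) :=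
        ENNReal.tsum_rpow_le_rpow_tsum_rpow _ hpr (ENNReal.toReal_mono hqT hpq)
    _ ≤ (eLpNorm f p μ ^ p.toReal) ^ (q.toReal / p.toReal) := by
        gcongr; exact tsum_eLpNorm_restrict_rpow_le hp0 hpT hAm hAd f
    _ = eLpNorm f p μ ^ q.toReal := by rw [← ENNReal.rpow_mul, mul_div_cancel₀ _ hpr.ne']

theorem norm_indicatorConstLp_rpow_neg_inv {r : ℝ≥0∞} (hr : r ≠ 0) {s : Set α}
    (hs : MeasurableSet s) (hμs : μ s ≠ ∞) (hs0 : μ.real s ≠ 0) :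
    ‖indicatorConstLp r hs hμs (μ.real s ^ (-(1 / r.toReal)))‖ = 1 := by
  have hpos : 0 < μ.real s := lt_of_le_of_ne measureReal_nonneg hs0.symm
  rw [norm_indicatorConstLp' hr (fun h => hs0 (by simp [measureReal_def, h])), Real.norm_eq_abs,
    abs_of_pos (Real.rpow_pos_of_pos hpos _), ← Real.rpow_add hpos, neg_add_cancel,
    Real.rpow_zero]

variable [Fact (1 ≤ p)]

theorem memLp_blockAverage (hpq : p ≤ q) (hlam : lam = (1 / p).toReal - (1 / q).toReal)
    (hAm : ∀ k, MeasurableSet (A k)) (hAd : Pairwise fun i j => Disjoint (A i) (A j))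
    (hA : ∀ k, μ (A k) ≠ ∞) (f : Lp ℝ p μ) : MemLp (blockAverage μ lam A f) q μ :=
  ⟨(measurable_blockAverage hAm _).aestronglyMeasurable,
    (eLpNorm_blockAverage_le Fact.out hpq hlam hAm hAd hA (Lp.aestronglyMeasurable f)).trans_lt
      (Lp.eLpNorm_lt_top f)⟩

theorem MeasureTheory.Lp.integrableOn_of_measure_ne_top (f : Lp ℝ p μ) {s : Set α} (hs : μ s ≠ ∞) :
    IntegrableOn f s μ :=
  haveI := isFiniteMeasure_restrict.mpr hs
  ((Lp.memLp f).restrict s).integrable Fact.out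

variable [Fact (1 ≤ q)]

noncomputable def blockAverageCLM (hpq : p ≤ q) (hlam : lam = (1 / p).toReal - (1 / q).toReal)
    (hAm : ∀ k, MeasurableSet (A k)) (hAd : Pairwise fun i j => Disjoint (A i) (A j))
    (hA : ∀ k, μ (A k) ≠ ∞) : Lp ℝ p μ →L[ℝ] Lp ℝ q μ :=
  LinearMap.mkContinuous
    { toFun := fun f => (memLp_blockAverage hpq hlam hAm hAd hA f).toLp
      map_add' := fun f g => by
        rw [← MemLp.toLp_add]
        refine MemLp.toLp_congr _ _ ?_
        rw [blockAverage_congr_ae (Lp.coeFn_add f g), blockAverage_add hAd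
          (fun k => Lp.integrableOn_of_measure_ne_top f (hA k))
          (fun k => Lp.integrableOn_of_measure_ne_top g (hA k))]
      map_smul' := fun c f => by
        rw [RingHom.id_apply, ← MemLp.toLp_const_smul]
        refine MemLp.toLp_congr _ _ ?_
        rw [blockAverage_congr_ae (Lp.coeFn_smul c f), blockAverage_smul hAd] }
    1 fun f => by
      rw [one_mul, LinearMap.coe_mk, AddHom.coe_mk, Lp.norm_toLp, Lp.norm_def]
      exact ENNReal.toReal_mono (Lp.eLpNorm_ne_top f)
        (eLpNorm_blockAverage_le Fact.out hpq hlam hAm hAd hA (Lp.aestronglyMeasurable f))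

variable (hpq : p ≤ q) (hlam : lam = (1 / p).toReal - (1 / q).toReal)
  (hAm : ∀ k, MeasurableSet (A k)) (hAd : Pairwise fun i j => Disjoint (A i) (A j))
  (hA : ∀ k, μ (A k) ≠ ∞)

theorem coeFn_blockAverageCLM (f : Lp ℝ p μ) :
    blockAverageCLM hpq hlam hAm hAd hA f =ᵐ[μ] blockAverage μ lam A f :=
  MemLp.coeFn_toLp (memLp_blockAverage hpq hlam hAm hAd hA f)

theorem norm_blockAverageCLM_le : ‖blockAverageCLM hpq hlam hAm hAd hA‖ ≤ 1 :=
  LinearMap.mkContinuous_norm_le _ zero_le_one _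

theorem blockAverageCLM_indicatorConstLp {j : ℕ} (hj : μ.real (A j) ≠ 0) (c : ℝ) :
    blockAverageCLM hpq hlam hAm hAd hA (indicatorConstLp p (hAm j) (hA j) c) =
      indicatorConstLp q (hAm j) (hA j) (μ.real (A j) ^ lam * c) := by
  refine Lp.ext ((coeFn_blockAverageCLM hpq hlam hAm hAd hA _).trans ?_)
  rw [blockAverage_congr_ae indicatorConstLp_coeFn, blockAverage_indicator hAm hAd hj]
  exact indicatorConstLp_coeFn.symm

theorem norm_blockAverageCLM {j : ℕ} (hj : μ (A j) ≠ 0) :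
    ‖blockAverageCLM hpq hlam hAm hAd hA‖ = 1 := by
  refine le_antisymm (norm_blockAverageCLM_le hpq hlam hAm hAd hA) ?_
  have hm : μ.real (A j) ≠ 0 := ENNReal.toReal_ne_zero.mpr ⟨hj, hA j⟩
  have hp0 : p ≠ 0 := (zero_lt_one.trans_le (Fact.out : 1 ≤ p)).ne'
  have hq0 : q ≠ 0 := (zero_lt_one.trans_le (Fact.out : 1 ≤ q)).ne'
  have hexp : μ.real (A j) ^ lam * μ.real (A j) ^ (-(1 / p.toReal)) =
      μ.real (A j) ^ (-(1 / q.toReal)) := by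
    rw [← Real.rpow_add (lt_of_le_of_ne measureReal_nonneg hm.symm), hlam]
    simp only [one_div, ENNReal.toReal_inv]
    ring_nf
  have h := (blockAverageCLM hpq hlam hAm hAd hA).le_opNorm
    (indicatorConstLp p (hAm j) (hA j) (μ.real (A j) ^ (-(1 / p.toReal))))
  rwa [blockAverageCLM_indicatorConstLp hpq hlam hAm hAd hA hm, hexp,
    norm_indicatorConstLp_rpow_neg_inv hq0 _ _ hm, norm_indicatorConstLp_rpow_neg_inv hp0 _ _ hm,
    mul_one] at h

end

theorem statement0_general (p q : ℝ≥0∞) [Fact (1 ≤ p)] [Fact (1 ≤ q)] (hpq : p < q)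
    (lam : ℝ) (hlam : lam = (1 / p).toReal - (1 / q).toReal)
    (A : ℕ → Set ℝ) (hAmeas : ∀ k, MeasurableSet (A k))
    (hAdisj : Pairwise fun i j => Disjoint (A i) (A j))
    (hApos : ∀ k, 0 < μ01 (A k)) :
    ∃ T : Lp ℝ p μ01 →L[ℝ] Lp ℝ q μ01,
      (∀ f : Lp ℝ p μ01, ∀ᵐ t ∂μ01,
        (T f : ℝ → ℝ) t =
          ∑' k, (μ01 (A k)).toReal ^ (lam - 1) * (∫ x in A k, f x ∂μ01) *
            (A k).indicator (fun _ => (1:ℝ)) t) ∧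
      ‖T‖ = 1 :=
  have hA : ∀ k, μ01 (A k) ≠ ∞ := fun _ => measure_ne_top _ _
  ⟨blockAverageCLM hpq.le hlam hAmeas hAdisj hA,
    coeFn_blockAverageCLM hpq.le hlam hAmeas hAdisj hA,
    norm_blockAverageCLM hpq.le hlam hAmeas hAdisj hA (hApos 0).ne'⟩

/-- Let `1 ≤ p < q ≤ ∞` with `λ = 1/p - 1/q ∈ (0,1)` and let `(A k)` be
pairwise disjoint measurable subsets of `[0,1]` of positive measure. The operator
`T f = ∑ k (μ(A k))^(λ-1) (∫_{A k} f dμ) χ_{A k}` is a bounded linear operator from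
`L_p[0,1]` to `L_q[0,1]` with operator norm equal to `1`. -/
theorem statement0 (p q : ℝ≥0∞) [Fact (1 ≤ p)] [Fact (1 ≤ q)] (hp : 1 ≤ p) (hpq : p < q)
    (lam : ℝ) (hlam : lam = (1 / p).toReal - (1 / q).toReal)
    (hlam0 : 0 < lam) (hlam1 : lam < 1)
    (A : ℕ → Set ℝ) (hAmeas : ∀ k, MeasurableSet (A k))
    (hAsub : ∀ k, A k ⊆ Set.Icc (0:ℝ) 1)
    (hAdisj : Pairwise fun i j => Disjoint (A i) (A j))
    (hApos : ∀ k, 0 < μ01 (A k)) :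
    ∃ T : Lp ℝ p μ01 →L[ℝ] Lp ℝ q μ01,
      (∀ f : Lp ℝ p μ01, ∀ᵐ t ∂μ01,
        (T f : ℝ → ℝ) t =
          ∑' k, (μ01 (A k)).toReal ^ (lam - 1) * (∫ x in A k, f x ∂μ01) *
            (A k).indicator (fun _ => (1:ℝ)) t) ∧
      ‖T‖ = 1 :=
  statement0_general p q hpq lam hlam A hAmeas hAdisj hApos
end

section
/- Let E be a 2n-dimensional subspace of a C(K)-space (e.g. L_∞). Then there exist vectors x_1, …, x_n ∈ E with 1/2 ≤ ‖x_k‖_∞ ≤ 1 for all k and ‖Σ_{k=1}^n a_k x_k‖_∞ ≤ (Σ_{k=1}^n a_k²)^{1/2} for all real scalars a_1, …, a_n. Consequently sup{ (Σ_{k=1}^n |x*(x_k)|²)^{1/2} : x* ∈ (L_∞)*, ‖x*‖ = 1 } ≤ 1. -/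
/-!
Identify `X` with `ℓ₂ᴺ` by some `e` and take `u : ℓ₂ᴺ → X` of norm at most one maximizing
`|det (e ∘ u)|`. For the orthogonal projection `P` onto a `k`-dimensional subspace, the operator
`(1 + t‖u P‖)⁻¹ • u (1 + t P)` is again in the unit ball, and its determinant is that of `u` times
`(1 + t)ᵏ / (1 + t‖u P‖)ᴺ`; maximality for small `t > 0` forces `k ≤ N ‖u P‖`. Projecting onto the
orthogonal complement of the vectors chosen so far, while fewer than `N / 2` are chosen, yields an
orthonormal family `w` with `‖u (w k)‖ > 1/2`, and `x k = u (w k)` works because `‖u‖ ≤ 1`.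
The bound on functionals follows from `∑ x*(x k)² = x*(∑ x*(x k) • x k) ≤ (∑ x*(x k)²)^(1/2)`.
-/

open Finset Module Metric Filter Topology

theorem Submodule.det_one_add_smul_starProjection {F : Type*} [NormedAddCommGroup F]
    [InnerProductSpace ℝ F] [FiniteDimensional ℝ F] (T : Submodule ℝ F) (t : ℝ) :
    (1 + t • T.starProjection).det = (1 + t) ^ finrank ℝ T := by
  let e := T.prodEquivOfIsCompl _ T.isCompl_orthogonal
  let b := (finBasis ℝ T).prod (finBasis ℝ Tᗮ)
  have hperp (y : Tᗮ) : T.starProjection y = 0 := (starProjection_apply_eq_zero_iff T).mpr y.2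
  have : LinearMap.toMatrix b b
      (e.symm ∘ₗ ((1 + t • T.starProjection : F →L[ℝ] F) : F →ₗ[ℝ] F) ∘ₗ (e : T × Tᗮ →ₗ[ℝ] F)) =
      Matrix.fromBlocks ((1 + t) • 1) 0 0 1 := by
    ext (_ | _) (_ | _) <;>
    simp [LinearMap.toMatrix_apply, b, Matrix.one_apply, Finsupp.single_apply, e, eq_comm, hperp]
    split_ifs <;> simp
  rw [ContinuousLinearMap.det, ← LinearMap.det_conj _ e.symm, LinearEquiv.symm_symm,
    ← LinearMap.det_toMatrix b, this, Matrix.det_fromBlocks_zero₂₁, Matrix.det_smul,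
    Matrix.det_one, Matrix.det_one]
  simp

theorem le_mul_of_forall_one_add_pow_le {k N : ℕ} {a : ℝ} (ha : 0 ≤ a)
    (h : ∀ t > 0, (1 + t) ^ k ≤ (1 + t * a) ^ N) : (k : ℝ) ≤ N * a := by
  have hbound : ∀ t > 0, (k : ℝ) ≤ N * a * (1 + t) := by
    intro t ht
    have hlog : k * Real.log (1 + t) ≤ N * Real.log (1 + t * a) := by
      rw [← Real.log_pow, ← Real.log_pow]
      exact Real.log_le_log (by positivity) (h t ht)
    have hlower : t / (1 + t) ≤ Real.log (1 + t) := by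
      have := Real.one_sub_inv_le_log_of_pos (by positivity : 0 < 1 + t)
      rwa [show 1 - (1 + t)⁻¹ = t / (1 + t) by field_simp; ring] at this
    have hupper : Real.log (1 + t * a) ≤ t * a := by
      linarith [Real.log_le_sub_one_of_pos (by positivity : 0 < 1 + t * a)]
    have : k * t / (1 + t) ≤ N * a * t := by
      rw [mul_div_assoc]; nlinarith [mul_le_mul_of_nonneg_left hlower k.cast_nonneg]
    rw [div_le_iff₀ (by positivity)] at this
    nlinarith
  have hlim : Tendsto (fun t : ℝ => N * a * (1 + t)) (𝓝[>] 0) (𝓝 (N * a)) := by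
    have : Continuous fun t : ℝ => N * a * (1 + t) := by fun_prop
    simpa using (this.tendsto 0).mono_left nhdsWithin_le_nhds
  exact ge_of_tendsto hlim (eventually_nhdsWithin_of_forall hbound)

theorem Orthonormal.norm_sum_smul {F ι : Type*} [NormedAddCommGroup F] [InnerProductSpace ℝ F]
    [Fintype ι] {w : ι → F} (hw : Orthonormal ℝ w)
    (a : ι → ℝ) : ‖∑ k, a k • w k‖ = √(∑ k, a k ^ 2) := by
  rw [← Real.sqrt_sq (norm_nonneg _), ← real_inner_self_eq_norm_sq, hw.inner_sum a a univ]
  simp [sq]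

section DeterminantMaximizer

variable {X F : Type*} [NormedAddCommGroup X] [NormedSpace ℝ X]
  [NormedAddCommGroup F] [InnerProductSpace ℝ F]

noncomputable def detRatio (e : X ≃L[ℝ] F) (u : F →L[ℝ] X) : ℝ :=
  |((e : X →L[ℝ] F) ∘L u).det|

theorem detRatio_comp (e : X ≃L[ℝ] F) (u : F →L[ℝ] X) (D : F →L[ℝ] F) :
    detRatio e (u ∘L D) = detRatio e u * |D.det| := by
  rw [detRatio, detRatio, ← abs_mul, ← ContinuousLinearMap.comp_assoc]
  exact congrArg abs (LinearMap.det_comp _ _)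

theorem continuous_detRatio (e : X ≃L[ℝ] F) : Continuous (detRatio e) :=
  (ContinuousLinearMap.continuous_det.comp (continuous_const.clm_comp continuous_id)).abs

theorem exists_detRatio_pos [FiniteDimensional ℝ F] (e : X ≃L[ℝ] F) :
    ∃ v ∈ closedBall (0 : F →L[ℝ] X) 1, 0 < detRatio e v := by
  set c := (‖(e.symm : F →L[ℝ] X)‖ + 1)⁻¹
  have hc : 0 < c := by positivity
  refine ⟨c • (e.symm : F →L[ℝ] X), ?_, ?_⟩
  · rw [mem_closedBall_zero_iff, norm_smul, Real.norm_of_nonneg hc.le]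
    exact inv_mul_le_one_of_le₀ (by linarith) (by positivity)
  · have : (e : X →L[ℝ] F) ∘L (c • (e.symm : F →L[ℝ] X)) = c • (1 : F →L[ℝ] F) := by
      ext; simp
    rw [detRatio, this, ContinuousLinearMap.det, ContinuousLinearMap.toLinearMap_smul,
      LinearMap.det_smul, ContinuousLinearMap.toLinearMap_one, map_one, mul_one]
    positivity

theorem exists_isMaxOn_detRatio [FiniteDimensional ℝ X] [FiniteDimensional ℝ F]
    (e : X ≃L[ℝ] F) : ∃ u ∈ closedBall (0 : F →L[ℝ] X) 1, IsMaxOn (detRatio e) (closedBall 0 1) u :=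
  (isCompact_closedBall (0 : F →L[ℝ] X) 1).exists_isMaxOn
    (nonempty_closedBall.mpr zero_le_one) (continuous_detRatio e).continuousOn

variable {e : X ≃L[ℝ] F} {u : F →L[ℝ] X}

theorem detRatio_pos_of_isMaxOn [FiniteDimensional ℝ F]
    (hmax : IsMaxOn (detRatio e) (closedBall 0 1) u) : 0 < detRatio e u := by
  obtain ⟨v, hv, hpos⟩ := exists_detRatio_pos e
  exact hpos.trans_le (hmax hv)

theorem finrank_le_mul_norm_comp_starProjection [FiniteDimensional ℝ F]
    (hu : u ∈ closedBall (0 : F →L[ℝ] X) 1)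
    (hmax : IsMaxOn (detRatio e) (closedBall 0 1) u)
    (T : Submodule ℝ F) :
    (finrank ℝ T : ℝ) ≤ finrank ℝ F * ‖u ∘L T.starProjection‖ := by
  set a := ‖u ∘L T.starProjection‖
  refine le_mul_of_forall_one_add_pow_le (norm_nonneg _) fun t ht => ?_
  have hta : 0 < 1 + t * a := by positivity
  have hv : u ∘L ((1 + t * a)⁻¹ • (1 + t • T.starProjection)) ∈ closedBall 0 1 := by
    rw [mem_closedBall_zero_iff] at hu ⊢
    rw [ContinuousLinearMap.comp_smul, norm_smul, Real.norm_of_nonneg (by positivity),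
      inv_mul_le_one₀ hta, ContinuousLinearMap.comp_add, ContinuousLinearMap.one_def,
      ContinuousLinearMap.comp_id, ContinuousLinearMap.comp_smul]
    calc ‖u + t • (u ∘L T.starProjection)‖ ≤ ‖u‖ + t * a := by
          grw [norm_add_le, norm_smul, Real.norm_of_nonneg ht.le]
      _ ≤ 1 + t * a := by linarith
  set v := u ∘L ((1 + t * a)⁻¹ • (1 + t • T.starProjection))
  have hdet : detRatio e v =
      detRatio e u * ((1 + t) ^ finrank ℝ T / (1 + t * a) ^ finrank ℝ F) := by
    rw [detRatio_comp, ContinuousLinearMap.det, ContinuousLinearMap.toLinearMap_smul,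
      LinearMap.det_smul, ← ContinuousLinearMap.det, T.det_one_add_smul_starProjection,
      abs_mul, abs_of_pos (by positivity), abs_of_pos (by positivity), inv_pow, inv_mul_eq_div]
  have hle : detRatio e v ≤ detRatio e u := hmax hv
  rw [hdet] at hle
  exact (div_le_one (by positivity)).mp <|
    le_of_mul_le_mul_left (by rwa [mul_one]) (detRatio_pos_of_isMaxOn hmax)

theorem exists_mem_norm_eq_one_lt_norm_apply [FiniteDimensional ℝ F]
    (hu : u ∈ closedBall (0 : F →L[ℝ] X) 1)
    (hmax : IsMaxOn (detRatio e) (closedBall 0 1) u)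
    (T : Submodule ℝ F) {r : ℝ} (hr : 0 ≤ r) (hT : r * finrank ℝ F < finrank ℝ T) :
    ∃ y ∈ T, ‖y‖ = 1 ∧ r < ‖u y‖ := by
  have hlt : r < ‖u ∘L T.starProjection‖ := by
    by_contra! h
    have := finrank_le_mul_norm_comp_starProjection hu hmax T
    nlinarith [mul_le_mul_of_nonneg_left h (Nat.cast_nonneg (α := ℝ) (finrank ℝ F))]
  obtain ⟨x, hx, hrx⟩ := (u ∘L T.starProjection).exists_lt_apply_of_lt_opNorm hlt
  rw [ContinuousLinearMap.comp_apply] at hrx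
  set p := T.starProjection x
  have hp : p ≠ 0 := by
    rintro hp
    rw [hp, map_zero, norm_zero] at hrx
    linarith
  have hp1 : ‖p‖ ≤ 1 := (T.norm_starProjection_apply_le x).trans hx.le
  refine ⟨‖p‖⁻¹ • p, T.smul_mem _ (T.starProjection_apply_mem x), norm_smul_inv_norm hp, ?_⟩
  rw [map_smul, norm_smul, norm_inv, norm_norm]
  exact hrx.trans_le <|
    le_mul_of_one_le_left (norm_nonneg _) ((one_le_inv₀ (norm_pos_iff.mpr hp)).mpr hp1)

theorem exists_orthonormal_half_lt_norm_apply [FiniteDimensional ℝ F]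
    (hu : u ∈ closedBall (0 : F →L[ℝ] X) 1)
    (hmax : IsMaxOn (detRatio e) (closedBall 0 1) u)
    (m : ℕ) (hm : 2 * m ≤ finrank ℝ F) :
    ∃ w : Fin m → F, Orthonormal ℝ w ∧ ∀ k, 1 / 2 < ‖u (w k)‖ := by
  induction m with
  | zero => exact ⟨Fin.elim0, Orthonormal.of_isEmpty _, fun k => k.elim0⟩
  | succ m ih =>
    obtain ⟨w, hw, hwu⟩ := ih (by omega)
    set T := (Submodule.span ℝ (Set.range w))ᗮ
    have hT : m + finrank ℝ T = finrank ℝ F := by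
      have := (Submodule.span ℝ (Set.range w)).finrank_add_finrank_orthogonal
      rwa [finrank_span_eq_card hw.linearIndependent, Fintype.card_fin] at this
    obtain ⟨y, hyT, hy1, hyu⟩ := exists_mem_norm_eq_one_lt_norm_apply hu hmax T
      (r := 1 / 2) (by norm_num) (by
        have : (2 * (m + 1) : ℝ) ≤ m + finrank ℝ T := by exact_mod_cast hT ▸ hm
        rw [← hT]; push_cast; linarith)
    refine ⟨Matrix.vecCons y w, orthonormal_vecCons_iff.mpr ⟨hy1, fun i => ?_, hw⟩, ?_⟩
    · exact Submodule.inner_left_of_mem_orthogonal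
        (Submodule.subset_span (Set.mem_range_self i)) hyT
    · exact Fin.cases hyu hwu

theorem exists_norm_sum_smul_le_sqrt [FiniteDimensional ℝ X] {n : ℕ}
    (hn : 2 * n ≤ finrank ℝ X) :
    ∃ x : Fin n → X, (∀ k, 1 / 2 < ‖x k‖ ∧ ‖x k‖ ≤ 1) ∧
      ∀ a : Fin n → ℝ, ‖∑ k, a k • x k‖ ≤ √(∑ k, a k ^ 2) := by
  let e := ContinuousLinearEquiv.ofFinrankEq
    (finrank_euclideanSpace_fin (𝕜 := ℝ) (n := finrank ℝ X)).symm
  obtain ⟨u, hu, hmax⟩ := exists_isMaxOn_detRatio e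
  obtain ⟨w, hw, hwu⟩ := exists_orthonormal_half_lt_norm_apply hu hmax n
    (by rwa [finrank_euclideanSpace_fin])
  have hu1 (z : EuclideanSpace ℝ (Fin (finrank ℝ X))) : ‖u z‖ ≤ ‖z‖ := by
    simpa using u.le_of_opNorm_le (mem_closedBall_zero_iff.mp hu) z
  refine ⟨fun k => u (w k), fun k => ⟨hwu k, (hu1 _).trans (hw.norm_eq_one k).le⟩, fun a => ?_⟩
  simp_rw [← map_smul, ← map_sum]
  exact (hu1 _).trans (hw.norm_sum_smul a).le

end DeterminantMaximizer

theorem sum_sq_apply_le_one {V ι : Type*} [NormedAddCommGroup V] [NormedSpace ℝ V]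
    [Fintype ι] {x : ι → V} (hx : ∀ a : ι → ℝ, ‖∑ k, a k • x k‖ ≤ √(∑ k, a k ^ 2))
    {φ : StrongDual ℝ V} (hφ : ‖φ‖ ≤ 1) : ∑ k, φ (x k) ^ 2 ≤ 1 := by
  set s := ∑ k, φ (x k) ^ 2
  have hs : s ≤ √s :=
    calc s = φ (∑ k, φ (x k) • x k) := by simp [s, sq]
      _ ≤ ‖∑ k, φ (x k) • x k‖ :=
          (le_abs_self _).trans ((φ.le_of_opNorm_le hφ _).trans_eq (one_mul _))
      _ ≤ √s := hx _
  have hs0 : 0 ≤ s := sum_nonneg fun k _ => sq_nonneg _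
  nlinarith [Real.sq_sqrt hs0, Real.sqrt_nonneg s]

/-- Let `E` be a `2n`-dimensional subspace of a `C(K)`-space. Then there
are `x 1, …, x n ∈ E` with `1/2 ≤ ‖x k‖ ≤ 1` and `‖∑ a k • x k‖ ≤ (∑ a k ^ 2)^(1/2)` for
all scalars; consequently `(∑ |x*(x k)|²)^(1/2) ≤ 1` for every norm-one functional `x*`. -/
theorem statement9 {K : Type*} [TopologicalSpace K] [CompactSpace K]
    (n : ℕ) (E : Submodule ℝ C(K, ℝ)) (hE : Module.finrank ℝ E = 2 * n) :
    ∃ x : Fin n → C(K, ℝ),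
      (∀ k, x k ∈ E) ∧
      (∀ k, (1:ℝ) / 2 ≤ ‖x k‖ ∧ ‖x k‖ ≤ 1) ∧
      (∀ a : Fin n → ℝ, ‖∑ k, a k • x k‖ ≤ (∑ k, (a k) ^ 2) ^ ((1:ℝ) / 2)) ∧
      (∀ φ : StrongDual ℝ C(K, ℝ), ‖φ‖ = 1 →
        (∑ k, (φ (x k)) ^ 2) ^ ((1:ℝ) / 2) ≤ 1) := by
  obtain rfl | hn := n.eq_zero_or_pos
  · refine ⟨Fin.elim0, fun k => k.elim0, fun k => k.elim0, fun a => ?_, fun φ _ => ?_⟩ <;> simp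
  have : FiniteDimensional ℝ E := Module.finite_of_finrank_pos (by omega)
  obtain ⟨y, hy, hya⟩ := exists_norm_sum_smul_le_sqrt (X := E) hE.ge
  have hx (a : Fin n → ℝ) : ‖∑ k, a k • (y k : C(K, ℝ))‖ ≤ √(∑ k, a k ^ 2) := by
    have : ∑ k, a k • (y k : C(K, ℝ)) = ((∑ k, a k • y k : E) : C(K, ℝ)) := by push_cast; rfl
    exact this ▸ hya a
  simp_rw [← Real.sqrt_eq_rpow]
  refine ⟨fun k => y k, fun k => (y k).2, fun k => ⟨(hy k).1.le, (hy k).2⟩, hx, fun φ hφ => ?_⟩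
  exact Real.sqrt_le_one.mpr (sum_sq_apply_le_one hx hφ.le)
end

section
/- Let 1 ≤ p < 2 and let (x_n) be a sequence in L_p[0,1] that is equivalent to the unit vector basis of ℓ_2 (so ‖Σ_{k=1}^n x_k‖_p ≈ n^{1/2}), admitting a decomposition x_n = g_n + h_n with |g_n| ∧ |h_n| = 0 and (h_n) pairwise disjoint. If ‖h_n‖_p ≥ K > 0 for all n, then a contradiction follows; hence lim inf ‖h_n‖_p = 0. -/
open MeasureTheory ENNReal Filter Set Finset

/-!
Average over all `2ⁿ` sign choices. Almost everywhere at most one `h k` is nonzero, and where it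
is, `x k = h k`; so pointwise the sign average of `|∑ ± x k|^p` dominates `∑ |h k|^p`.
Integrating, the average of `‖∑ ± x k‖^p` is at least `n K^p / 2`, whereas the upper
`ℓ₂`-estimate bounds every `‖∑ ± x k‖^p` by `c₂^p n^{p/2}`, which is impossible for large `n`
because `p < 2`.
-/

def boolSign (b : Bool) : ℝ := if b then 1 else -1

lemma abs_boolSign (b : Bool) : |boolSign b| = 1 := by
  cases b <;> simp [boolSign]

lemma boolSign_not (b : Bool) : boolSign (!b) = -boolSign b := by
  cases b <;> simp [boolSign]

lemma sum_boolSign_sq {ι : Type*} [Fintype ι] (σ : ι → Bool) :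
    ∑ k, boolSign (σ k) ^ 2 = Fintype.card ι := by
  simp [← sq_abs, abs_boolSign]

section Signs

variable {ι : Type*} [Fintype ι] [DecidableEq ι]

lemma sum_boolSign_update_sub (σ : ι → Bool) (b : ι → ℝ) (j : ι) :
    ∑ k, boolSign (σ k) * b k - ∑ k, boolSign (Function.update σ j (!σ j) k) * b k =
      2 * boolSign (σ j) * b j := by
  rw [← Finset.sum_sub_distrib, Finset.sum_eq_single j]
  · simp only [Function.update_self, boolSign_not]; ring
  · intro k _ hk; simp [Function.update_of_ne hk]
  · simp

/-- Flipping the `j`-th sign pairs the sign vectors so that the two partial sums of each pair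
differ by `± 2 b j`; hence one of them has modulus at least `|b j|`. -/
lemma two_pow_card_mul_abs_rpow_le_sum_boolSign {p : ℝ} (hp : 0 ≤ p) (b : ι → ℝ) (j : ι) :
    2 ^ Fintype.card ι * |b j| ^ p ≤ 2 * ∑ σ : ι → Bool, |∑ k, boolSign (σ k) * b k| ^ p := by
  set S : (ι → Bool) → ℝ := fun σ => ∑ k, boolSign (σ k) * b k
  set flip : (ι → Bool) → (ι → Bool) := fun σ => Function.update σ j (!σ j)
  have hflip : Function.Involutive flip := fun σ => by
    ext k; by_cases hk : k = j <;> simp [flip, hk]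
  have hpair : ∀ σ, |b j| ^ p ≤ |S σ| ^ p + |S (flip σ)| ^ p := by
    intro σ
    have hdiff : 2 * |b j| ≤ |S σ| + |S (flip σ)| := by
      have := abs_sub (S σ) (S (flip σ))
      rwa [sum_boolSign_update_sub, abs_mul, abs_mul, abs_boolSign, abs_two, mul_one] at this
    rcases le_total |S (flip σ)| |S σ| with hle | hle
    · have := Real.rpow_le_rpow (abs_nonneg _) (by linarith : |b j| ≤ |S σ|) hp
      linarith [Real.rpow_nonneg (abs_nonneg (S (flip σ))) p]
    · have := Real.rpow_le_rpow (abs_nonneg _) (by linarith : |b j| ≤ |S (flip σ)|) hp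
      linarith [Real.rpow_nonneg (abs_nonneg (S σ)) p]
  calc 2 ^ Fintype.card ι * |b j| ^ p = ∑ _σ : ι → Bool, |b j| ^ p := by simp
    _ ≤ ∑ σ, (|S σ| ^ p + |S (flip σ)| ^ p) := Finset.sum_le_sum fun σ _ => hpair σ
    _ = 2 * ∑ σ, |S σ| ^ p := by
      rw [Finset.sum_add_distrib, hflip.bijective.sum_comp fun σ => |S σ| ^ p]; ring

lemma two_pow_card_mul_sum_abs_rpow_le_sum_boolSign {p : ℝ} (hp : 0 < p) {g h : ι → ℝ}
    (hgh : ∀ k, g k = 0 ∨ h k = 0) (hdisj : Pairwise fun j k => h j = 0 ∨ h k = 0) :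
    2 ^ Fintype.card ι * ∑ k, |h k| ^ p ≤
      2 * ∑ σ : ι → Bool, |∑ k, boolSign (σ k) * (g k + h k)| ^ p := by
  by_cases hzero : ∀ k, h k = 0
  · simp only [hzero, abs_zero, Real.zero_rpow hp.ne', Finset.sum_const_zero, mul_zero]
    positivity
  push Not at hzero
  obtain ⟨j, hj⟩ := hzero
  have hsingle : ∑ k, |h k| ^ p = |g j + h j| ^ p := by
    rw [Finset.sum_eq_single j, (hgh j).resolve_right hj, zero_add]
    · intro k _ hk
      rw [(hdisj (Ne.symm hk)).resolve_left hj, abs_zero, Real.zero_rpow hp.ne']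
    · simp
  rw [hsingle]
  exact two_pow_card_mul_abs_rpow_le_sum_boolSign hp.le (fun k => g k + h k) j

end Signs

namespace MeasureTheory.Lp

variable {α : Type*} [MeasurableSpace α] {μ : Measure α} {p : ℝ}

lemma norm_rpow_eq_integral (hp : 0 < p) (f : Lp ℝ (ENNReal.ofReal p) μ) :
    ‖f‖ ^ p = ∫ t, |f t| ^ p ∂μ := by
  rw [Lp.norm_def, toReal_eLpNorm (Lp.aestronglyMeasurable f),
    lpNorm_eq_integral_norm_rpow_toReal (by simpa using hp) ofReal_ne_top
      (Lp.aestronglyMeasurable f), ENNReal.toReal_ofReal hp.le,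
    ← Real.rpow_mul (integral_nonneg fun t => by positivity), inv_mul_cancel₀ hp.ne',
    Real.rpow_one]
  simp only [Real.norm_eq_abs]

lemma integrable_abs_rpow (hp : 0 < p) (f : Lp ℝ (ENNReal.ofReal p) μ) :
    Integrable (fun t => |f t| ^ p) μ := by
  have := (Lp.memLp f).integrable_norm_rpow (by simpa using hp) ofReal_ne_top
  simpa [ENNReal.toReal_ofReal hp.le] using this

lemma ae_eq_zero_or_eq_zero_of_abs_inf_abs_eq_zero {q : ℝ≥0∞}
    {f₁ f₂ : Lp ℝ q μ} (hf : |f₁| ⊓ |f₂| = 0) : ∀ᵐ t ∂μ, f₁ t = 0 ∨ f₂ t = 0 := by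
  have hzero := Lp.coeFn_zero ℝ q μ
  rw [← hf] at hzero
  filter_upwards [hzero, Lp.coeFn_inf |f₁| |f₂|, Lp.coeFn_abs f₁, Lp.coeFn_abs f₂]
    with t h0 hinf h₁ h₂
  rw [hinf, Pi.inf_apply, h₁, h₂] at h0
  rcases min_choice |f₁ t| |f₂ t| with hmin | hmin <;> rw [hmin] at h0
  · exact .inl (abs_eq_zero.mp h0)
  · exact .inr (abs_eq_zero.mp h0)

lemma two_pow_card_mul_sum_norm_rpow_le_sum_boolSign {ι : Type*} [Fintype ι] [DecidableEq ι]
    (hp : 0 < p) {x g h : ι → Lp ℝ (ENNReal.ofReal p) μ} (hdecomp : ∀ k, x k = g k + h k)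
    (hgh : ∀ k, |g k| ⊓ |h k| = 0) (hdisj : Pairwise fun j k => |h j| ⊓ |h k| = 0) :
    2 ^ Fintype.card ι * ∑ k, ‖h k‖ ^ p ≤
      2 * ∑ σ : ι → Bool, ‖∑ k, boolSign (σ k) • x k‖ ^ p := by
  have hgh_ae : ∀ᵐ t ∂μ, ∀ k, g k t = 0 ∨ h k t = 0 :=
    ae_all_iff.mpr fun k => ae_eq_zero_or_eq_zero_of_abs_inf_abs_eq_zero (hgh k)
  have hdisj_ae : ∀ᵐ t ∂μ, Pairwise fun j k => h j t = 0 ∨ h k t = 0 := by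
    refine ae_all_iff.mpr fun j => ae_all_iff.mpr fun k => ?_
    by_cases hjk : j = k
    · exact .of_forall fun _ hne => absurd hjk hne
    · filter_upwards [ae_eq_zero_or_eq_zero_of_abs_inf_abs_eq_zero (hdisj hjk)] with t ht
      exact fun _ => ht
  have hsum_ae : ∀ᵐ t ∂μ, ∀ σ : ι → Bool,
      (∑ k, boolSign (σ k) • x k) t = ∑ k, boolSign (σ k) * (g k t + h k t) := by
    refine ae_all_iff.mpr fun σ => ?_
    have hterm : ∀ᵐ t ∂μ, ∀ k, (boolSign (σ k) • x k) t = boolSign (σ k) * (g k t + h k t) := by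
      refine ae_all_iff.mpr fun k => ?_
      filter_upwards [Lp.coeFn_smul (boolSign (σ k)) (x k), hdecomp k ▸ Lp.coeFn_add (g k) (h k)]
        with t hsmul hadd
      rw [hsmul, Pi.smul_apply, smul_eq_mul, hadd, Pi.add_apply]
    filter_upwards [Lp.coeFn_fun_finsetSum Finset.univ fun k => boolSign (σ k) • x k, hterm]
      with t hsum hterm
    rw [hsum]
    exact Finset.sum_congr rfl fun k _ => hterm k
  have hpointwise : (fun t => 2 ^ Fintype.card ι * ∑ k, |h k t| ^ p) ≤ᵐ[μ]
      fun t => 2 * ∑ σ : ι → Bool, |(∑ k, boolSign (σ k) • x k) t| ^ p := by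
    filter_upwards [hgh_ae, hdisj_ae, hsum_ae] with t hgh hdisj hsum
    simp only [hsum]
    exact two_pow_card_mul_sum_abs_rpow_le_sum_boolSign hp hgh hdisj
  have hint := integral_mono_ae
    (((integrable_finsetSum _ fun k _ => integrable_abs_rpow hp (h k)).const_mul _))
    (((integrable_finsetSum _ fun σ _ => integrable_abs_rpow hp _).const_mul _)) hpointwise
  rwa [integral_const_mul, integral_const_mul,
    integral_finsetSum _ fun k _ => integrable_abs_rpow hp (h k),
    integral_finsetSum _ fun σ _ => integrable_abs_rpow hp _,
    ← Finset.sum_congr rfl fun k _ => norm_rpow_eq_integral hp (h k),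
    ← Finset.sum_congr rfl fun σ _ => norm_rpow_eq_integral hp _] at hint

end MeasureTheory.Lp

lemma not_forall_nat_mul_le_mul_rpow {q : ℝ} (hq : q < 1) {a : ℝ} (ha : 0 < a) (C : ℝ) :
    ¬ ∀ n : ℕ, a * n ≤ C * (n : ℝ) ^ q := by
  intro hle
  have hgrowth : Tendsto (fun n : ℕ => a * (n : ℝ) ^ (1 - q)) atTop atTop :=
    ((tendsto_rpow_atTop (by linarith)).comp tendsto_natCast_atTop_atTop).const_mul_atTop ha
  obtain ⟨n, hn, hpos⟩ :=
    ((hgrowth.eventually_gt_atTop C).and (eventually_gt_atTop 0)).exists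
  have hn0 : (0 : ℝ) < n := Nat.cast_pos.mpr hpos
  have : a * (n : ℝ) ^ (1 - q) * (n : ℝ) ^ q ≤ C * (n : ℝ) ^ q := by
    rw [mul_assoc, ← Real.rpow_add hn0, sub_add_cancel, Real.rpow_one]
    exact hle n
  exact absurd (le_of_mul_le_mul_right this (by positivity)) (not_le.mpr hn)

theorem statement14_general (p : ℝ) (hp : 1 ≤ p) (hp2 : p < 2)
    (x g h : ℕ → Lp ℝ (ENNReal.ofReal p) μ01)
    (hdecomp : ∀ n, x n = g n + h n)
    (hgh : ∀ n, |g n| ⊓ |h n| = 0)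
    (hdisj : Pairwise fun n m => |h n| ⊓ |h m| = 0)
    (c₁ c₂ : ℝ) (hc₂ : 0 < c₂)
    (hequiv : ∀ (n : ℕ) (a : Fin n → ℝ),
      c₁ * (∑ k, (a k) ^ 2) ^ ((1:ℝ) / 2) ≤ ‖∑ k, a k • x k‖ ∧
      ‖∑ k, a k • x k‖ ≤ c₂ * (∑ k, (a k) ^ 2) ^ ((1:ℝ) / 2))
    (K : ℝ) (hK : 0 < K) (hh : ∀ n, K ≤ ‖h n‖) :
    False := by
  have hp0 : 0 < p := by linarith
  refine not_forall_nat_mul_le_mul_rpow (q := p / 2) (by linarith) (a := K ^ p)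
    (by positivity) (2 * c₂ ^ p) fun n => ?_
  have hsigns := Lp.two_pow_card_mul_sum_norm_rpow_le_sum_boolSign hp0
    (x := fun k : Fin n => x k) (fun k => hdecomp k) (fun k => hgh k)
    (hdisj.comp_of_injective Fin.val_injective)
  have hupper (σ : Fin n → Bool) :
      ‖∑ k, boolSign (σ k) • x k‖ ^ p ≤ c₂ ^ p * (n : ℝ) ^ (p / 2) := by
    have := (hequiv n fun k => boolSign (σ k)).2
    rw [sum_boolSign_sq, Fintype.card_fin] at this
    calc ‖∑ k, boolSign (σ k) • x k‖ ^ p ≤ (c₂ * (n : ℝ) ^ ((1 : ℝ) / 2)) ^ p :=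
          Real.rpow_le_rpow (by rw [Lp.norm_def]; positivity) this hp0.le
      _ = c₂ ^ p * (n : ℝ) ^ (p / 2) := by
          rw [Real.mul_rpow hc₂.le (by positivity), ← Real.rpow_mul (Nat.cast_nonneg n)]
          ring_nf
  rw [Fintype.card_fin] at hsigns
  refine le_of_mul_le_mul_left ?_ (by positivity : (0 : ℝ) < 2 ^ n)
  calc 2 ^ n * (K ^ p * n) = 2 ^ n * ∑ _k : Fin n, K ^ p := by simp [mul_comm]
    _ ≤ 2 ^ n * ∑ k : Fin n, ‖h k‖ ^ p := by gcongr with k; exact hh k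
    _ ≤ 2 * ∑ σ : Fin n → Bool, ‖∑ k, boolSign (σ k) • x k‖ ^ p := hsigns
    _ ≤ 2 * ∑ _σ : Fin n → Bool, c₂ ^ p * (n : ℝ) ^ (p / 2) := by gcongr with σ; exact hupper σ
    _ = 2 ^ n * (2 * c₂ ^ p * n ^ (p / 2)) := by
      simp only [sum_const, card_univ, Fintype.card_pi, Fintype.card_bool, prod_const,
        Fintype.card_fin, nsmul_eq_mul, Nat.cast_pow, Nat.cast_ofNat]
      ring

/-- Let `1 ≤ p < 2` and let `(x n)` in `L_p[0,1]` be equivalent to the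
unit vector basis of `ℓ₂`, with a decomposition `x n = g n + h n`, `|g n| ⊓ |h n| = 0`,
and `(h n)` pairwise disjoint. If `‖h n‖_p ≥ K > 0` for all `n`, then a contradiction
follows (hence `liminf ‖h n‖_p = 0`). -/
theorem statement14 (p : ℝ) (hp : 1 ≤ p) (hp2 : p < 2) [Fact (1 ≤ ENNReal.ofReal p)]
    (x g h : ℕ → Lp ℝ (ENNReal.ofReal p) μ01)
    (hdecomp : ∀ n, x n = g n + h n)
    (hgh : ∀ n, |g n| ⊓ |h n| = 0)
    (hdisj : Pairwise fun n m => |h n| ⊓ |h m| = 0)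
    (c₁ c₂ : ℝ) (hc₁ : 0 < c₁) (hc₂ : 0 < c₂)
    (hequiv : ∀ (n : ℕ) (a : Fin n → ℝ),
      c₁ * (∑ k, (a k) ^ 2) ^ ((1:ℝ) / 2) ≤ ‖∑ k, a k • x k‖ ∧
      ‖∑ k, a k • x k‖ ≤ c₂ * (∑ k, (a k) ^ 2) ^ ((1:ℝ) / 2))
    (K : ℝ) (hK : 0 < K) (hh : ∀ n, K ≤ ‖h n‖) :
    False :=
  statement14_general p hp hp2 x g h hdecomp hgh hdisj c₁ c₂ hc₂ hequiv K hK hh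
end

section
/- Let E be a reflexive Banach lattice and F a Banach lattice satisfying a lower 2-estimate with constant K. Let T: E → F be bounded and suppose (x_n) is a normalized weakly null 1-unconditional basic sequence in E with ‖Tx_n‖_F ≥ δ > 0 such that (Tx_n) is equivalent to a pairwise disjoint sequence in F. If E has type 2 with constant M, then for all scalars (a_k): K·δ·(Σ_{k=1}^m |a_k|²)^{1/2} ≤ ‖Σ_{k=1}^m a_k Tx_{n_k}‖_F ≤ M‖T‖(Σ_{k=1}^m |a_k|²)^{1/2}; hence T is an isomorphism on the closed span of (x_{n_k}), which is isomorphic to ℓ₂. Consequently T is not ℓ₂-singular. -/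
/-!
By 1-unconditionality every Rademacher average of `(aₖ xₖ)` equals `‖∑ aₖ xₖ‖`, so type 2 yields
the upper estimate `‖∑ aₖ xₖ‖ ≤ M (∑ aₖ²)^{1/2}`, and applying `T` costs a factor `‖T‖`.
For the lower estimate pass to the disjoint sequence `(zₙ)`: `‖zₙ‖ ≥ δ / d₂`, disjointness
survives scalar multiplication, and the lower 2-estimate gives
`‖∑ aₖ T xₖ‖ ≥ d₁ K (δ / d₂) (∑ aₖ²)^{1/2}`. The upper estimate makes `v ↦ ∑ vₙ xₙ` a bounded
operator `ℓ₂ → E`, and the lower one, passed to the limit, shows that `T` composed with it is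
bounded below.
-/

open Filter Finset NormedSpace

section NormedLattice
variable {G : Type*} [NormedAddCommGroup G] [Lattice G] [HasSolidNorm G] [IsOrderedAddMonoid G]
  [NormedSpace ℝ G]

/- `0 ≤ t • w` for dyadic `t`, because `0 ≤ 2 • u → 0 ≤ u` in a lattice-ordered group; it then
passes to all `t ≥ 0` since the positive cone of a normed lattice is closed. -/
theorem HasSolidNorm.smul_nonneg {w : G} (hw : 0 ≤ w) {t : ℝ} (ht : 0 ≤ t) : 0 ≤ t • w := by
  have dyadic : ∀ n k : ℕ, 0 ≤ ((k : ℝ) / 2 ^ n) • w := by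
    intro n
    induction n with
    | zero => intro k; simpa [Nat.cast_smul_eq_nsmul] using nsmul_nonneg hw k
    | succ n ih =>
      intro k
      apply nsmul_two_semiclosed
      rw [two_nsmul, ← add_smul]
      convert ih k using 2
      ring
  have hlim : Tendsto (fun n : ℕ => ((⌊t * 2 ^ n⌋₊ : ℝ) / 2 ^ n) • w) atTop (nhds (t • w)) :=
    ((tendsto_nat_floor_mul_div_atTop ht).comp
      (tendsto_pow_atTop_atTop_of_one_lt one_lt_two)).smul_const w
  exact isClosed_nonneg.mem_of_tendsto hlim (Eventually.of_forall fun n => dyadic n _)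

instance HasSolidNorm.isOrderedModule : IsOrderedModule ℝ G :=
  .of_smul_nonneg fun _ ht _ hw => HasSolidNorm.smul_nonneg hw ht

end NormedLattice

section OrderedModule
variable {𝕜 G : Type*} [Field 𝕜] [LinearOrder 𝕜] [IsStrictOrderedRing 𝕜]
  [AddCommGroup G] [Lattice G] [Module 𝕜 G] [IsOrderedModule 𝕜 G]

theorem abs_smul_le (a : 𝕜) (u : G) : |a • u| ≤ |a| • |u| := by
  have key : ∀ b : 𝕜, 0 ≤ b → |b • u| ≤ b • |u| := fun b hb =>
    abs_le'.2 ⟨smul_le_smul_of_nonneg_left (le_abs_self u) hb,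
      by rw [← smul_neg]; exact smul_le_smul_of_nonneg_left (neg_le_abs u) hb⟩
  rcases le_total 0 a with ha | ha
  · simpa [abs_of_nonneg ha] using key a ha
  · simpa [abs_of_nonpos ha] using key (-a) (neg_nonneg.2 ha)

theorem abs_smul_inf_abs_smul_eq_zero [IsOrderedAddMonoid G] {u v : G} (h : |u| ⊓ |v| = 0)
    (a b : 𝕜) : |a • u| ⊓ |b • v| = 0 := by
  set c := |a| + |b| + 1
  have hc : 0 < c := by positivity
  refine le_antisymm ?_ (le_inf (abs_nonneg _) (abs_nonneg _))
  calc |a • u| ⊓ |b • v| ≤ c • |u| ⊓ c • |v| := by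
        gcongr
        · exact (abs_smul_le a u).trans
            (smul_le_smul_of_nonneg_right (by linarith [abs_nonneg b]) (abs_nonneg u))
        · exact (abs_smul_le b v).trans
            (smul_le_smul_of_nonneg_right (by linarith [abs_nonneg a]) (abs_nonneg v))
    _ = c • (|u| ⊓ |v|) := ((OrderIso.smulRight hc).map_inf _ _).symm
    _ = 0 := by rw [h, smul_zero]

end OrderedModule

def HasTypeTwo (E : Type*) [NormedAddCommGroup E] [NormedSpace ℝ E] (M : ℝ) : Prop :=
  ∀ (m : ℕ) (y : Fin m → E),
    ((2 : ℝ) ^ m)⁻¹ * ∑ ε : Fin m → Bool, ‖∑ i, (if ε i then (1:ℝ) else -1) • y i‖ ≤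
      M * (∑ i, ‖y i‖ ^ 2) ^ ((1:ℝ) / 2)

def HasLowerTwoEstimate (F : Type*) [NormedAddCommGroup F] [Lattice F] (K : ℝ) : Prop :=
  ∀ (m : ℕ) (z : Fin m → F), (∀ i j, i ≠ j → |z i| ⊓ |z j| = 0) →
    K * (∑ i, ‖z i‖ ^ 2) ^ ((1:ℝ) / 2) ≤ ‖∑ i, z i‖

def IsOneUnconditional {E : Type*} [NormedAddCommGroup E] [NormedSpace ℝ E] (x : ℕ → E) : Prop :=
  ∀ (m : ℕ) (a ε : Fin m → ℝ), (∀ i, |ε i| = 1) → ‖∑ i, (ε i * a i) • x i‖ = ‖∑ i, a i • x i‖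

theorem HasTypeTwo.norm_sum_smul_le {E : Type*} [NormedAddCommGroup E] [NormedSpace ℝ E] {M : ℝ}
    (hE : HasTypeTwo E M) {x : ℕ → E} (hx : ∀ n, ‖x n‖ = 1) (hu : IsOneUnconditional x)
    (m : ℕ) (a : Fin m → ℝ) : ‖∑ i, a i • x i‖ ≤ M * √(∑ i, a i ^ 2) := by
  have hsign : ∀ ε : Fin m → Bool,
      ‖∑ i, (if ε i then (1:ℝ) else -1) • a i • x i‖ = ‖∑ i, a i • x i‖ := fun ε => by
    simp_rw [smul_smul]
    exact hu m a _ fun i => by split <;> simp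
  have hnorm : ∀ i, ‖a i • x i‖ ^ 2 = a i ^ 2 := fun i => by
    rw [norm_smul, hx, mul_one, Real.norm_eq_abs, sq_abs]
  have h := hE m fun i => a i • x i
  simp only [hsign, hnorm, Finset.sum_const, Finset.card_univ, Fintype.card_fun, Fintype.card_bool,
    Fintype.card_fin, nsmul_eq_mul, Nat.cast_pow, Nat.cast_ofNat, ← Real.sqrt_eq_rpow] at h
  rwa [inv_mul_cancel_left₀ (by positivity)] at h

theorem HasLowerTwoEstimate.mul_sqrt_le_norm_sum_smul {F : Type*} [NormedAddCommGroup F]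
    [Lattice F] [HasSolidNorm F] [IsOrderedAddMonoid F] [NormedSpace ℝ F] {K : ℝ}
    (hF : HasLowerTwoEstimate F K) (hK : 0 ≤ K) {z : ℕ → F}
    (hz : Pairwise fun n m => |z n| ⊓ |z m| = 0) {r : ℝ} (hr : 0 ≤ r) (hzr : ∀ n, r ≤ ‖z n‖)
    (m : ℕ) (a : Fin m → ℝ) : K * r * √(∑ i, a i ^ 2) ≤ ‖∑ i, a i • z i‖ := by
  have hsq : r ^ 2 * ∑ i, a i ^ 2 ≤ ∑ i, ‖a i • z i‖ ^ 2 := by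
    rw [Finset.mul_sum]
    gcongr with i
    rw [norm_smul, mul_pow, Real.norm_eq_abs, sq_abs, mul_comm]
    gcongr
    exact hzr i
  calc K * r * √(∑ i, a i ^ 2) = K * √(r ^ 2 * ∑ i, a i ^ 2) := by
        rw [Real.sqrt_mul (sq_nonneg r), Real.sqrt_sq hr, mul_assoc]
    _ ≤ K * √(∑ i, ‖a i • z i‖ ^ 2) := by gcongr
    _ ≤ ‖∑ i, a i • z i‖ := by
        rw [Real.sqrt_eq_rpow]
        exact hF m _ fun i j hij =>
          abs_smul_inf_abs_smul_eq_zero (hz fun h => hij (Fin.ext h)) _ _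

theorem Finset.sum_fin_ite_mem {M : Type*} [AddCommMonoid M] {s : Finset ℕ} {m : ℕ}
    (hs : s ⊆ range m) (g : ℕ → M) :
    ∑ i : Fin m, (if (i : ℕ) ∈ s then g i else 0) = ∑ n ∈ s, g n := by
  rw [Fin.sum_univ_eq_sum_range (fun k => if k ∈ s then g k else 0), Finset.sum_ite_mem,
    inter_eq_right.2 hs]

theorem forall_finset_of_forall_fin {V : Type*} [AddCommMonoid V] [Module ℝ V] {f : ℕ → V}
    {P : V → ℝ → Prop} (h : ∀ (m : ℕ) (a : Fin m → ℝ), P (∑ i, a i • f i) (∑ i, a i ^ 2))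
    (s : Finset ℕ) (a : ℕ → ℝ) : P (∑ n ∈ s, a n • f n) (∑ n ∈ s, a n ^ 2) := by
  obtain ⟨m, hs⟩ := s.exists_nat_subset_range
  have h := h m fun i => if (i : ℕ) ∈ s then a i else 0
  simp only [ite_smul, zero_smul, ite_pow, ne_eq, OfNat.ofNat_ne_zero, not_false_eq_true,
    zero_pow] at h
  rwa [Finset.sum_fin_ite_mem hs fun n => a n • f n,
    Finset.sum_fin_ite_mem hs fun n => a n ^ 2] at h

open scoped lp

theorem lp.hasSum_sq (v : ℓ²(ℕ, ℝ)) : HasSum (fun n => v n ^ 2) (‖v‖ ^ 2) := by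
  simpa using lp.hasSum_norm (p := 2) (by norm_num) v

section L2Synthesis

variable {E F : Type*} [NormedAddCommGroup E] [NormedSpace ℝ E] [NormedAddCommGroup F]
  [NormedSpace ℝ F] {x : ℕ → E} {C : ℝ}

theorem summable_smul_of_norm_sum_le [CompleteSpace E]
    (hx : ∀ (s : Finset ℕ) (a : ℕ → ℝ), ‖∑ n ∈ s, a n • x n‖ ≤ C * √(∑ n ∈ s, a n ^ 2))
    (v : ℓ²(ℕ, ℝ)) : Summable fun n => v n • x n := by
  refine summable_iff_vanishing_norm.2 fun ε hε => ?_
  set η := ε / (|C| + 1)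
  obtain ⟨s, hs⟩ := summable_iff_vanishing_norm.1 (lp.hasSum_sq v).summable (η ^ 2) (by positivity)
  refine ⟨s, fun t ht => ?_⟩
  have htail : √(∑ n ∈ t, v n ^ 2) < η := by
    rw [Real.sqrt_lt' (by positivity)]
    exact (le_abs_self _).trans_lt (hs t ht)
  calc ‖∑ n ∈ t, v n • x n‖ ≤ C * √(∑ n ∈ t, v n ^ 2) := hx t v
    _ ≤ (|C| + 1) * √(∑ n ∈ t, v n ^ 2) := by gcongr; linarith [le_abs_self C]
    _ < (|C| + 1) * η := by gcongr
    _ = ε := mul_div_cancel₀ ε (by positivity)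

theorem norm_tsum_smul_le
    (hx : ∀ (s : Finset ℕ) (a : ℕ → ℝ), ‖∑ n ∈ s, a n • x n‖ ≤ C * √(∑ n ∈ s, a n ^ 2))
    (v : ℓ²(ℕ, ℝ)) (hv : Summable fun n => v n • x n) : ‖∑' n, v n • x n‖ ≤ C * ‖v‖ := by
  have hC : 0 ≤ C := by simpa using (norm_nonneg _).trans (hx {0} 1)
  refine le_of_tendsto hv.hasSum.tendsto_sum_nat.norm (Eventually.of_forall fun n => ?_)
  calc ‖∑ k ∈ range n, v k • x k‖ ≤ C * √(∑ k ∈ range n, v k ^ 2) := hx _ v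
    _ ≤ C * √(‖v‖ ^ 2) := by
        gcongr
        exact sum_le_hasSum _ (fun k _ => sq_nonneg _) (lp.hasSum_sq v)
    _ = C * ‖v‖ := by rw [Real.sqrt_sq (norm_nonneg v)]

variable [CompleteSpace E]
  (hx : ∀ (s : Finset ℕ) (a : ℕ → ℝ), ‖∑ n ∈ s, a n • x n‖ ≤ C * √(∑ n ∈ s, a n ^ 2))

noncomputable def l2Synthesis : ℓ²(ℕ, ℝ) →L[ℝ] E :=
  LinearMap.mkContinuous
    { toFun := fun v => ∑' n, v n • x n
      map_add' := fun u v => by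
        simp only [lp.coeFn_add, Pi.add_apply, add_smul]
        exact (summable_smul_of_norm_sum_le hx u).tsum_add (summable_smul_of_norm_sum_le hx v)
      map_smul' := fun c v => by
        simp only [lp.coeFn_smul, Pi.smul_apply, smul_eq_mul, mul_smul, RingHom.id_apply]
        exact (summable_smul_of_norm_sum_le hx v).tsum_const_smul c }
    C fun v => norm_tsum_smul_le hx v (summable_smul_of_norm_sum_le hx v)

theorem mul_norm_le_norm_map_l2Synthesis (T : E →L[ℝ] F) {c : ℝ}
    (hT : ∀ (s : Finset ℕ) (a : ℕ → ℝ), c * √(∑ n ∈ s, a n ^ 2) ≤ ‖∑ n ∈ s, a n • T (x n)‖)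
    (v : ℓ²(ℕ, ℝ)) : c * ‖v‖ ≤ ‖T (l2Synthesis hx v)‖ := by
  have hsq := ((lp.hasSum_sq v).tendsto_sum_nat.sqrt).const_mul c
  rw [Real.sqrt_sq (norm_nonneg v)] at hsq
  have himage : HasSum (fun n => v n • T (x n)) (T (∑' n, v n • x n)) := by
    simpa only [map_smul] using (summable_smul_of_norm_sum_le hx v).hasSum.mapL T
  exact le_of_tendsto_of_tendsto' hsq himage.tendsto_sum_nat.norm fun n => hT _ v

end L2Synthesis

theorem statement17_general {E F : Type*}
    [NormedAddCommGroup E] [NormedSpace ℝ E] [CompleteSpace E]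
    [NormedAddCommGroup F] [Lattice F] [HasSolidNorm F] [IsOrderedAddMonoid F] [NormedSpace ℝ F]
    -- `E` has type 2 with constant `M`
    (M : ℝ)
    (htype : ∀ (m : ℕ) (y : Fin m → E),
      ((2 : ℝ) ^ m)⁻¹ * ∑ ε : Fin m → Bool, ‖∑ i, (if ε i then (1:ℝ) else -1) • y i‖ ≤
        M * (∑ i, ‖y i‖ ^ 2) ^ ((1:ℝ) / 2))
    -- `F` satisfies a lower 2-estimate with constant `K`
    (K : ℝ) (hK : 0 < K)
    (hlower : ∀ (m : ℕ) (z : Fin m → F), (∀ i j, i ≠ j → |z i| ⊓ |z j| = 0) →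
      K * (∑ i, ‖z i‖ ^ 2) ^ ((1:ℝ) / 2) ≤ ‖∑ i, z i‖)
    (T : E →L[ℝ] F) (x : ℕ → E)
    (hnorm : ∀ n, ‖x n‖ = 1)
    -- `(x n)` is 1-unconditional
    (huncond : ∀ (m : ℕ) (a ε : Fin m → ℝ), (∀ i, |ε i| = 1) →
      ‖∑ i, (ε i * a i) • x i‖ = ‖∑ i, a i • x i‖)
    (δ : ℝ) (hδ : 0 < δ) (hTx : ∀ n, δ ≤ ‖T (x n)‖)
    -- `(T x_n)` is equivalent to a pairwise disjoint sequence `(z n)` in `F`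
    (z : ℕ → F) (hzdisj : Pairwise fun n m => |z n| ⊓ |z m| = 0)
    (d₁ d₂ : ℝ) (hd₁ : 0 < d₁) (hd₂ : 0 < d₂)
    (hzequiv : ∀ (m : ℕ) (a : Fin m → ℝ),
      d₁ * ‖∑ i, a i • z i‖ ≤ ‖∑ i, a i • T (x i)‖ ∧
      ‖∑ i, a i • T (x i)‖ ≤ d₂ * ‖∑ i, a i • z i‖) :
    (∃ φ : ℕ → ℕ, StrictMono φ ∧ ∃ c₁ : ℝ, 0 < c₁ ∧ ∀ (m : ℕ) (a : Fin m → ℝ),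
      c₁ * (∑ k, (a k) ^ 2) ^ ((1:ℝ) / 2) ≤ ‖∑ k, a k • T (x (φ k))‖ ∧
      ‖∑ k, a k • T (x (φ k))‖ ≤ M * ‖T‖ * (∑ k, (a k) ^ 2) ^ ((1:ℝ) / 2)) ∧
    -- `T` is not `ℓ₂`-singular
    (∃ (e : lp (fun _ : ℕ => ℝ) 2 →L[ℝ] E) (c : ℝ), 0 < c ∧
      (∀ v, c * ‖v‖ ≤ ‖e v‖) ∧ ∀ v, c * ‖v‖ ≤ ‖T (e v)‖) := by
  have hup := HasTypeTwo.norm_sum_smul_le htype hnorm huncond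
  have hz : ∀ n, δ / d₂ ≤ ‖z n‖ := fun n => by
    have h := (hzequiv (n + 1) (Pi.single (Fin.last n) 1)).2
    exact (div_le_iff₀' hd₂).2 ((hTx n).trans (by simpa using h))
  set c₁ := d₁ * (K * (δ / d₂))
  have hlow : ∀ (m : ℕ) (a : Fin m → ℝ), c₁ * √(∑ i, a i ^ 2) ≤ ‖∑ i, a i • T (x i)‖ :=
    fun m a => by
      rw [mul_assoc]
      exact (mul_le_mul_of_nonneg_left (HasLowerTwoEstimate.mul_sqrt_le_norm_sum_smul hlower
        hK.le hzdisj (by positivity) hz m a) hd₁.le).trans (hzequiv m a).1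
  have hupT : ∀ (m : ℕ) (a : Fin m → ℝ), ‖∑ i, a i • T (x i)‖ ≤ M * ‖T‖ * √(∑ i, a i ^ 2) :=
    fun m a => by
      simp only [← map_smul, ← map_sum]
      exact (T.le_opNorm _).trans
        ((mul_le_mul_of_nonneg_left (hup m a) (norm_nonneg T)).trans_eq (by ring))
  have hc₁ : 0 < c₁ := by positivity
  have hupS := forall_finset_of_forall_fin (P := fun u S => ‖u‖ ≤ M * √S) hup
  set e := l2Synthesis hupS
  have hTe := mul_norm_le_norm_map_l2Synthesis hupS T
    (forall_finset_of_forall_fin (P := fun u S => c₁ * √S ≤ ‖u‖) hlow)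
  have hcT : c₁ / (‖T‖ + 1) ≤ c₁ := div_le_self hc₁.le (by simp)
  refine ⟨⟨id, strictMono_id, c₁, hc₁, fun m a => ?_⟩, e, c₁ / (‖T‖ + 1), by positivity,
    fun v => ?_, fun v => (mul_le_mul_of_nonneg_right hcT (norm_nonneg v)).trans (hTe v)⟩
  · rw [← Real.sqrt_eq_rpow]
    exact ⟨hlow m a, hupT m a⟩
  · rw [div_mul_eq_mul_div, div_le_iff₀ (by positivity), mul_comm (‖e v‖)]
    exact (hTe v).trans ((T.le_opNorm _).trans (by gcongr; linarith))

/-- Let `E` be a reflexive Banach lattice of type 2 (constant `M`),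
`F` a Banach lattice satisfying a lower 2-estimate (constant `K`), `T : E → F` bounded,
and `(x n)` a normalized weakly null 1-unconditional sequence with `‖T x_n‖ ≥ δ > 0` such
that `(T x_n)` is equivalent to a pairwise disjoint sequence in `F`. Then along a
subsequence one has the two-sided `ℓ₂`-estimate
`c₁ (∑ a_k²)^{1/2} ≤ ‖∑ a_k T x_{n_k}‖ ≤ M ‖T‖ (∑ a_k²)^{1/2}`; hence `T` is bounded
below on a subspace isomorphic to `ℓ₂`, i.e. `T` is not `ℓ₂`-singular. -/
theorem statement17 {E F : Type*}
    [NormedAddCommGroup E] [Lattice E] [HasSolidNorm E] [IsOrderedAddMonoid E] [NormedSpace ℝ E] [CompleteSpace E]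
    [NormedAddCommGroup F] [Lattice F] [HasSolidNorm F] [IsOrderedAddMonoid F] [NormedSpace ℝ F] [CompleteSpace F]
    -- `E` is reflexive
    (hrefl : Function.Surjective (inclusionInDoubleDual ℝ E))
    -- `E` has type 2 with constant `M`
    (M : ℝ) (hM : 0 < M)
    (htype : ∀ (m : ℕ) (y : Fin m → E),
      ((2 : ℝ) ^ m)⁻¹ * ∑ ε : Fin m → Bool, ‖∑ i, (if ε i then (1:ℝ) else -1) • y i‖ ≤
        M * (∑ i, ‖y i‖ ^ 2) ^ ((1:ℝ) / 2))
    -- `F` satisfies a lower 2-estimate with constant `K`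
    (K : ℝ) (hK : 0 < K)
    (hlower : ∀ (m : ℕ) (z : Fin m → F), (∀ i j, i ≠ j → |z i| ⊓ |z j| = 0) →
      K * (∑ i, ‖z i‖ ^ 2) ^ ((1:ℝ) / 2) ≤ ‖∑ i, z i‖)
    (T : E →L[ℝ] F) (x : ℕ → E)
    (hnorm : ∀ n, ‖x n‖ = 1)
    (hweak : ∀ φ : StrongDual ℝ E, Tendsto (fun n => φ (x n)) atTop (nhds 0))
    -- `(x n)` is 1-unconditional
    (huncond : ∀ (m : ℕ) (a ε : Fin m → ℝ), (∀ i, |ε i| = 1) →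
      ‖∑ i, (ε i * a i) • x i‖ = ‖∑ i, a i • x i‖)
    (δ : ℝ) (hδ : 0 < δ) (hTx : ∀ n, δ ≤ ‖T (x n)‖)
    -- `(T x_n)` is equivalent to a pairwise disjoint sequence `(z n)` in `F`
    (z : ℕ → F) (hzdisj : Pairwise fun n m => |z n| ⊓ |z m| = 0)
    (d₁ d₂ : ℝ) (hd₁ : 0 < d₁) (hd₂ : 0 < d₂)
    (hzequiv : ∀ (m : ℕ) (a : Fin m → ℝ),
      d₁ * ‖∑ i, a i • z i‖ ≤ ‖∑ i, a i • T (x i)‖ ∧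
      ‖∑ i, a i • T (x i)‖ ≤ d₂ * ‖∑ i, a i • z i‖) :
    (∃ φ : ℕ → ℕ, StrictMono φ ∧ ∃ c₁ : ℝ, 0 < c₁ ∧ ∀ (m : ℕ) (a : Fin m → ℝ),
      c₁ * (∑ k, (a k) ^ 2) ^ ((1:ℝ) / 2) ≤ ‖∑ k, a k • T (x (φ k))‖ ∧
      ‖∑ k, a k • T (x (φ k))‖ ≤ M * ‖T‖ * (∑ k, (a k) ^ 2) ^ ((1:ℝ) / 2)) ∧
    -- `T` is not `ℓ₂`-singular
    (∃ (e : lp (fun _ : ℕ => ℝ) 2 →L[ℝ] E) (c : ℝ), 0 < c ∧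
      (∀ v, c * ‖v‖ ≤ ‖e v‖) ∧ ∀ v, c * ‖v‖ ≤ ‖T (e v)‖) :=
  statement17_general M htype K hK hlower T x hnorm huncond δ hδ hTx z hzdisj d₁ d₂ hd₁ hd₂ hzequiv
end
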